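/- Let χ : H → ℝ be smooth with e^{2iχ(z)} ≠ 1 for all z ∈ H, and let φ₊, φ₋ : H → ℝ be smooth positive functions satisfying the gauge-equivalence system ∂_{z̄} log φ₋ = ∂_{z̄} log φ₊ − 2i·∂_{z̄}χ and ∂_z log φ₋ = e^{2iχ}·∂_z log φ₊ on H. Then χ is harmonic (∂_z∂_{z̄}χ = 0), and both super-potentials are completely determined by χ up to a multiplicative constant: ∂_{z̄} log φ₊ = ∂_{z̄}(e^{2iχ})/(e^{2iχ} − 1) and ∂_{z̄} log φ₋ = ∂_{z̄}(e^{−2iχ})/(e^{−2iχ} − 1) on H. -/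

import Mathlib

open Complex ComplexConjugate

noncomputable section

/-- Wirtinger derivative ∂_z f = (1/2)(∂_t f − i ∂_r f). -/
def wdz (f : ℂ → ℂ) (z : ℂ) : ℂ :=
  (2:ℂ)⁻¹ * (fderiv ℝ f z 1 - Complex.I * fderiv ℝ f z Complex.I)

/-- Wirtinger derivative ∂_z̄ f = (1/2)(∂_t f + i ∂_r f). -/
def wdzbar (f : ℂ → ℂ) (z : ℂ) : ℂ :=
  (2:ℂ)⁻¹ * (fderiv ℝ f z 1 + Complex.I * fderiv ℝ f z Complex.I)

/-- A real-valued function regarded as complex-valued. -/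
def cre (φ : ℂ → ℝ) : ℂ → ℂ := fun z => (φ z : ℂ)

/-- ∂_z log φ := (∂_z φ)/φ for positive real φ. -/
def dzlog (φ : ℂ → ℝ) (z : ℂ) : ℂ := wdz (cre φ) z / (φ z : ℂ)

/-- ∂_z̄ log φ := (∂_z̄ φ)/φ for positive real φ. -/
def dzbarlog (φ : ℂ → ℝ) (z : ℂ) : ℂ := wdzbar (cre φ) z / (φ z : ℂ)

/-- Flat Laplacian ∂_t² + ∂_r² on ℂ ≅ ℝ², where z = t + ir. -/
def lap2 (φ : ℂ → ℝ) (z : ℂ) : ℝ :=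
  fderiv ℝ (fun w => fderiv ℝ φ w 1) z 1 +
  fderiv ℝ (fun w => fderiv ℝ φ w Complex.I) z Complex.I

/-- The upper half-plane. -/
def H : Set ℂ := {z : ℂ | 0 < z.im}

/-- The connection coefficient β = ∂_z̄ log φ + 1/(z − z̄) of the vortex ansatz. -/
def betaOf (φ : ℂ → ℝ) (z : ℂ) : ℂ := dzbarlog φ z + 1 / (z - conj z)

/-- The Higgs field Φ = i(z − z̄)·∂_z log φ of the vortex ansatz. -/
def higgsOf (φ : ℂ → ℝ) (z : ℂ) : ℂ := Complex.I * (z - conj z) * dzlog φ z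

-- compute wdz/wdzbar from a HasFDerivAt witness
lemma wdz_of {f : ℂ → ℂ} {f' : ℂ →L[ℝ] ℂ} {z : ℂ} (h : HasFDerivAt f f' z) :
    wdz f z = (2:ℂ)⁻¹ * (f' 1 - Complex.I * f' Complex.I) := by
  rw [wdz, h.fderiv]

lemma wdzbar_of {f : ℂ → ℂ} {f' : ℂ →L[ℝ] ℂ} {z : ℂ} (h : HasFDerivAt f f' z) :
    wdzbar f z = (2:ℂ)⁻¹ * (f' 1 + Complex.I * f' Complex.I) := by
  rw [wdzbar, h.fderiv]

lemma wdz_congr {f g : ℂ → ℂ} {z : ℂ} (h : f =ᶠ[nhds z] g) : wdz f z = wdz g z := by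
  rw [wdz, wdz, h.fderiv_eq]

lemma wdzbar_congr {f g : ℂ → ℂ} {z : ℂ} (h : f =ᶠ[nhds z] g) : wdzbar f z = wdzbar g z := by
  rw [wdzbar, wdzbar, h.fderiv_eq]

-- product rules
lemma wdz_mul {f g : ℂ → ℂ} {z : ℂ} (hf : DifferentiableAt ℝ f z) (hg : DifferentiableAt ℝ g z) :
    wdz (fun w => f w * g w) z = wdz f z * g z + f z * wdz g z := by
  have h := hf.hasFDerivAt.mul' hg.hasFDerivAt
  rw [wdz_of (f := fun w => f w * g w) h, wdz, wdz]
  simp only [ContinuousLinearMap.add_apply, ContinuousLinearMap.smul_apply,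
    ContinuousLinearMap.smulRight_apply, smul_eq_mul, op_smul_eq_mul]
  ring

lemma wdzbar_mul {f g : ℂ → ℂ} {z : ℂ} (hf : DifferentiableAt ℝ f z) (hg : DifferentiableAt ℝ g z) :
    wdzbar (fun w => f w * g w) z = wdzbar f z * g z + f z * wdzbar g z := by
  have h := hf.hasFDerivAt.mul' hg.hasFDerivAt
  rw [wdzbar_of (f := fun w => f w * g w) h, wdzbar, wdzbar]
  simp only [ContinuousLinearMap.add_apply, ContinuousLinearMap.smul_apply,
    ContinuousLinearMap.smulRight_apply, smul_eq_mul, op_smul_eq_mul]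
  ring

lemma wdz_const_mul {f : ℂ → ℂ} {z : ℂ} (c : ℂ) (hf : DifferentiableAt ℝ f z) :
    wdz (fun w => c * f w) z = c * wdz f z := by
  have h := hf.hasFDerivAt.const_mul c
  rw [wdz_of h, wdz]
  simp only [ContinuousLinearMap.smul_apply, smul_eq_mul]
  ring

lemma wdzbar_const_mul {f : ℂ → ℂ} {z : ℂ} (c : ℂ) (hf : DifferentiableAt ℝ f z) :
    wdzbar (fun w => c * f w) z = c * wdzbar f z := by
  have h := hf.hasFDerivAt.const_mul c
  rw [wdzbar_of h, wdzbar]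
  simp only [ContinuousLinearMap.smul_apply, smul_eq_mul]
  ring

lemma wdz_sub_const {f : ℂ → ℂ} {z : ℂ} (c : ℂ) (hf : DifferentiableAt ℝ f z) :
    wdz (fun w => f w - c) z = wdz f z := by
  have h := hf.hasFDerivAt.sub_const c
  rw [wdz_of h, wdz]

lemma wdzbar_sub_const {f : ℂ → ℂ} {z : ℂ} (c : ℂ) (hf : DifferentiableAt ℝ f z) :
    wdzbar (fun w => f w - c) z = wdzbar f z := by
  have h := hf.hasFDerivAt.sub_const c
  rw [wdzbar_of h, wdzbar]

-- inverse rule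
lemma wdz_inv {f : ℂ → ℂ} {z : ℂ} (hf : DifferentiableAt ℝ f z) (h0 : f z ≠ 0) :
    wdz (fun w => (f w)⁻¹) z = -wdz f z / (f z) ^ 2 := by
  have hinv : HasFDerivAt (fun w : ℂ => w⁻¹)
      (-(ContinuousLinearMap.mulLeftRight ℝ ℂ (f z)⁻¹ (f z)⁻¹)) (f z) := hasFDerivAt_inv' h0
  have h := hinv.comp z hf.hasFDerivAt
  rw [show (fun w => (f w)⁻¹) = (fun w : ℂ => w⁻¹) ∘ f from rfl, wdz_of h, wdz]
  simp only [ContinuousLinearMap.coe_comp', Function.comp_apply, ContinuousLinearMap.neg_apply,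
    ContinuousLinearMap.mulLeftRight_apply]
  field_simp
  ring

lemma wdzbar_inv {f : ℂ → ℂ} {z : ℂ} (hf : DifferentiableAt ℝ f z) (h0 : f z ≠ 0) :
    wdzbar (fun w => (f w)⁻¹) z = -wdzbar f z / (f z) ^ 2 := by
  have hinv : HasFDerivAt (fun w : ℂ => w⁻¹)
      (-(ContinuousLinearMap.mulLeftRight ℝ ℂ (f z)⁻¹ (f z)⁻¹)) (f z) := hasFDerivAt_inv' h0
  have h := hinv.comp z hf.hasFDerivAt
  rw [show (fun w => (f w)⁻¹) = (fun w : ℂ => w⁻¹) ∘ f from rfl, wdzbar_of h, wdzbar]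
  simp only [ContinuousLinearMap.coe_comp', Function.comp_apply, ContinuousLinearMap.neg_apply,
    ContinuousLinearMap.mulLeftRight_apply]
  field_simp
  ring

-- exp chain rule
lemma wdz_cexp {f : ℂ → ℂ} {z : ℂ} (hf : DifferentiableAt ℝ f z) :
    wdz (fun w => Complex.exp (f w)) z = Complex.exp (f z) * wdz f z := by
  have h := hf.hasFDerivAt.cexp
  rw [wdz_of h, wdz]
  simp only [ContinuousLinearMap.smul_apply, smul_eq_mul]
  ring

lemma wdzbar_cexp {f : ℂ → ℂ} {z : ℂ} (hf : DifferentiableAt ℝ f z) :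
    wdzbar (fun w => Complex.exp (f w)) z = Complex.exp (f z) * wdzbar f z := by
  have h := hf.hasFDerivAt.cexp
  rw [wdzbar_of h, wdzbar]
  simp only [ContinuousLinearMap.smul_apply, smul_eq_mul]
  ring

-- real-valued functions: wdzbar = conj wdz
lemma cre_hasFDerivAt {φ : ℂ → ℝ} {z : ℂ} (hφ : DifferentiableAt ℝ φ z) :
    HasFDerivAt (cre φ) (Complex.ofRealCLM.comp (fderiv ℝ φ z)) z :=
  Complex.ofRealCLM.hasFDerivAt.comp z hφ.hasFDerivAt

lemma wdzbar_conj_cre {φ : ℂ → ℝ} {z : ℂ} (hφ : DifferentiableAt ℝ φ z) :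
    wdzbar (cre φ) z = conj (wdz (cre φ) z) := by
  have h := cre_hasFDerivAt hφ
  rw [wdzbar_of h, wdz_of h]
  simp only [ContinuousLinearMap.coe_comp', Function.comp_apply, Complex.ofRealCLM_apply]
  rw [map_mul, map_sub, map_mul]
  simp only [Complex.conj_ofReal, map_inv₀, map_ofNat, Complex.conj_I]
  ring

-- smoothness machinery
lemma contDiffOn_fderiv_apply {f : ℂ → ℂ} {s : Set ℂ} (hs : IsOpen s)
    (hf : ContDiffOn ℝ (⊤ : ℕ∞) f s) (v : ℂ) :
    ContDiffOn ℝ (⊤ : ℕ∞) (fun w => fderiv ℝ f w v) s := by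
  have h1 : ContDiffOn ℝ (⊤ : ℕ∞) (fderiv ℝ f) s := hf.fderiv_of_isOpen hs (by simp)
  exact (ContinuousLinearMap.apply ℝ ℂ v).contDiff.comp_contDiffOn h1

lemma diffAt_of_contDiffOn {f : ℂ → ℂ} {s : Set ℂ} (hs : IsOpen s)
    (hf : ContDiffOn ℝ (⊤ : ℕ∞) f s) {z : ℂ} (hz : z ∈ s) : DifferentiableAt ℝ f z :=
  (hf.contDiffAt (hs.mem_nhds hz)).differentiableAt (by simp)

lemma wdz_contDiffOn {f : ℂ → ℂ} {s : Set ℂ} (hs : IsOpen s) (hf : ContDiffOn ℝ (⊤ : ℕ∞) f s) :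
    ContDiffOn ℝ (⊤ : ℕ∞) (wdz f) s := by
  unfold wdz
  exact contDiffOn_const.mul ((contDiffOn_fderiv_apply hs hf 1).sub
    (contDiffOn_const.mul (contDiffOn_fderiv_apply hs hf Complex.I)))

lemma wdzbar_contDiffOn {f : ℂ → ℂ} {s : Set ℂ} (hs : IsOpen s) (hf : ContDiffOn ℝ (⊤ : ℕ∞) f s) :
    ContDiffOn ℝ (⊤ : ℕ∞) (wdzbar f) s := by
  unfold wdzbar
  exact contDiffOn_const.mul ((contDiffOn_fderiv_apply hs hf 1).add
    (contDiffOn_const.mul (contDiffOn_fderiv_apply hs hf Complex.I)))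

-- second derivative application
lemma fderiv_fderiv_apply {f : ℂ → ℂ} {s : Set ℂ} (hs : IsOpen s) (hf : ContDiffOn ℝ (⊤ : ℕ∞) f s)
    {z : ℂ} (hz : z ∈ s) (u v : ℂ) :
    fderiv ℝ (fun w => fderiv ℝ f w v) z u = fderiv ℝ (fderiv ℝ f) z u v := by
  have hF : ContDiffOn ℝ (⊤ : ℕ∞) (fderiv ℝ f) s := hf.fderiv_of_isOpen hs (by simp)
  have hF' : DifferentiableAt ℝ (fderiv ℝ f) z :=
    (hF.contDiffAt (hs.mem_nhds hz)).differentiableAt (by simp)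
  have h := ((ContinuousLinearMap.apply ℝ ℂ v).hasFDerivAt.comp z hF'.hasFDerivAt).fderiv
  calc fderiv ℝ (fun w => fderiv ℝ f w v) z u
      = fderiv ℝ ((ContinuousLinearMap.apply ℝ ℂ v) ∘ (fderiv ℝ f)) z u := rfl
    _ = fderiv ℝ (fderiv ℝ f) z u v := by rw [h]; rfl

-- Clairaut for Wirtinger derivatives
lemma wdz_wdzbar_comm {f : ℂ → ℂ} {s : Set ℂ} (hs : IsOpen s) (hf : ContDiffOn ℝ (⊤ : ℕ∞) f s)
    {z : ℂ} (hz : z ∈ s) : wdz (wdzbar f) z = wdzbar (wdz f) z := by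
  set A : ℂ → ℂ := fun w => fderiv ℝ f w 1 with hA_def
  set B : ℂ → ℂ := fun w => fderiv ℝ f w Complex.I with hB_def
  have hA : DifferentiableAt ℝ A z :=
    diffAt_of_contDiffOn hs (contDiffOn_fderiv_apply hs hf 1) hz
  have hB : DifferentiableAt ℝ B z :=
    diffAt_of_contDiffOn hs (contDiffOn_fderiv_apply hs hf Complex.I) hz
  have hsymm := (hf.contDiffAt (hs.mem_nhds hz)).isSymmSndFDerivAt (by rw [minSmoothness_of_isRCLikeNormedField]; exact (WithTop.coe_le_coe.2 (le_top : (2:ℕ∞) ≤ ⊤) : ((2:ℕ∞) : WithTop ℕ∞) ≤ ((⊤ : ℕ∞) : WithTop ℕ∞)))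
  have hDA : ∀ u, fderiv ℝ A z u = fderiv ℝ (fderiv ℝ f) z u 1 := fun u =>
    fderiv_fderiv_apply hs hf hz u 1
  have hDB : ∀ u, fderiv ℝ B z u = fderiv ℝ (fderiv ℝ f) z u Complex.I := fun u =>
    fderiv_fderiv_apply hs hf hz u Complex.I
  have h1 : HasFDerivAt (fun w => (2:ℂ)⁻¹ * (A w + Complex.I * B w))
      ((2:ℂ)⁻¹ • (fderiv ℝ A z + Complex.I • fderiv ℝ B z)) z := by
    exact ((hA.hasFDerivAt.add (hB.hasFDerivAt.const_mul Complex.I)).const_mul (2:ℂ)⁻¹)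
  have h2 : HasFDerivAt (fun w => (2:ℂ)⁻¹ * (A w - Complex.I * B w))
      ((2:ℂ)⁻¹ • (fderiv ℝ A z - Complex.I • fderiv ℝ B z)) z := by
    exact ((hA.hasFDerivAt.sub (hB.hasFDerivAt.const_mul Complex.I)).const_mul (2:ℂ)⁻¹)
  have e1 : wdz (wdzbar f) z = (2:ℂ)⁻¹ * (((2:ℂ)⁻¹ • (fderiv ℝ A z + Complex.I • fderiv ℝ B z)) 1
      - Complex.I * ((2:ℂ)⁻¹ • (fderiv ℝ A z + Complex.I • fderiv ℝ B z)) Complex.I) :=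
    wdz_of h1
  have e2 : wdzbar (wdz f) z = (2:ℂ)⁻¹ * (((2:ℂ)⁻¹ • (fderiv ℝ A z - Complex.I • fderiv ℝ B z)) 1
      + Complex.I * ((2:ℂ)⁻¹ • (fderiv ℝ A z - Complex.I • fderiv ℝ B z)) Complex.I) :=
    wdzbar_of h2
  rw [e1, e2]
  simp only [ContinuousLinearMap.smul_apply, ContinuousLinearMap.add_apply,
    ContinuousLinearMap.sub_apply, smul_eq_mul, hDA, hDB]
  rw [hsymm.eq 1 Complex.I]
  ring

lemma wdzbar_neg {f : ℂ → ℂ} {z : ℂ} (hf : DifferentiableAt ℝ f z) :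
    wdzbar (fun w => -(f w)) z = -wdzbar f z := by
  have h := hf.hasFDerivAt.neg
  rw [wdzbar_of (f := fun w => -(f w)) h, wdzbar]
  simp only [ContinuousLinearMap.neg_apply]
  ring


lemma isOpen_H : IsOpen H := isOpen_Ioi.preimage Complex.continuous_im

lemma conj_dzlog {φ : ℂ → ℝ} {z : ℂ} (hφ : DifferentiableAt ℝ φ z) :
    conj (dzlog φ z) = dzbarlog φ z := by
  unfold dzlog dzbarlog
  rw [map_div₀, Complex.conj_ofReal, ← wdzbar_conj_cre hφ]

lemma conj_dzbarlog {φ : ℂ → ℝ} {z : ℂ} (hφ : DifferentiableAt ℝ φ z) :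
    conj (dzbarlog φ z) = dzlog φ z := by
  rw [← conj_dzlog hφ, Complex.conj_conj]

lemma conj_twoI_ofReal (x : ℝ) : conj (2 * Complex.I * (x:ℂ)) = -(2*Complex.I*(x:ℂ)) := by
  rw [map_mul, map_mul, Complex.conj_ofReal, Complex.conj_I, map_ofNat]
  ring

lemma conj_expE (x : ℝ) :
    conj (Complex.exp (2 * Complex.I * (x:ℂ))) = (Complex.exp (2 * Complex.I * (x:ℂ)))⁻¹ := by
  rw [← Complex.exp_conj, conj_twoI_ofReal, Complex.exp_neg]


/-- If two super-potentials φ₊, φ₋ produce gauge-equivalent vortices via the gauge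
transformation g = e^{2iχ}, i.e. ∂_z̄ log φ₋ = ∂_z̄ log φ₊ − 2i∂_z̄χ and
∂_z log φ₋ = e^{2iχ}·∂_z log φ₊ on H, then χ is harmonic and both super-potentials are
completely determined by χ: ∂_z̄ log φ₊ = ∂_z̄(e^{2iχ})/(e^{2iχ} − 1) and
∂_z̄ log φ₋ = ∂_z̄(e^{−2iχ})/(e^{−2iχ} − 1). -/
theorem superpotentials_determined_by_gauge (χ : ℂ → ℝ) (hχ : ContDiffOn ℝ (⊤ : ℕ∞) χ H)
    (hne : ∀ z ∈ H, Complex.exp (2 * Complex.I * (χ z : ℂ)) ≠ 1)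
    (φp φm : ℂ → ℝ) (hφp : ContDiffOn ℝ (⊤ : ℕ∞) φp H) (hφm : ContDiffOn ℝ (⊤ : ℕ∞) φm H)
    (hposp : ∀ z ∈ H, 0 < φp z) (hposm : ∀ z ∈ H, 0 < φm z)
    (hbar : ∀ z ∈ H, dzbarlog φm z = dzbarlog φp z - 2 * Complex.I * wdzbar (cre χ) z)
    (hz : ∀ z ∈ H, dzlog φm z = Complex.exp (2 * Complex.I * (χ z : ℂ)) * dzlog φp z) :
    ∀ z ∈ H,
      wdz (wdzbar (cre χ)) z = 0 ∧
      dzbarlog φp z =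
        wdzbar (fun w => Complex.exp (2 * Complex.I * (χ w : ℂ))) z /
          (Complex.exp (2 * Complex.I * (χ z : ℂ)) - 1) ∧
      dzbarlog φm z =
        wdzbar (fun w => Complex.exp (-(2 * Complex.I * (χ w : ℂ)))) z /
          (Complex.exp (-(2 * Complex.I * (χ z : ℂ))) - 1) := by
  
  -- smoothness of complexifications
  have hχc : ContDiffOn ℝ (⊤ : ℕ∞) (cre χ) H := Complex.ofRealCLM.contDiff.comp_contDiffOn hχ
  have hφpc : ContDiffOn ℝ (⊤ : ℕ∞) (cre φp) H := Complex.ofRealCLM.contDiff.comp_contDiffOn hφp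
  -- pointwise differentiability on H
  have hdχ : ∀ w ∈ H, DifferentiableAt ℝ χ w := fun w hw =>
    (hχ.contDiffAt (isOpen_H.mem_nhds hw)).differentiableAt (by simp)
  have hdφp : ∀ w ∈ H, DifferentiableAt ℝ φp w := fun w hw =>
    (hφp.contDiffAt (isOpen_H.mem_nhds hw)).differentiableAt (by simp)
  have hdφm : ∀ w ∈ H, DifferentiableAt ℝ φm w := fun w hw =>
    (hφm.contDiffAt (isOpen_H.mem_nhds hw)).differentiableAt (by simp)
  have hdcre : ∀ w ∈ H, DifferentiableAt ℝ (cre χ) w := fun w hw =>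
    diffAt_of_contDiffOn isOpen_H hχc hw
  -- notation shortcuts (as plain haves)
  have hE0 : ∀ w : ℂ, Complex.exp (2 * Complex.I * (χ w : ℂ)) ≠ 0 := fun w =>
    Complex.exp_ne_zero _
  have hEm1 : ∀ w ∈ H, Complex.exp (2 * Complex.I * (χ w : ℂ)) - 1 ≠ 0 := fun w hw =>
    sub_ne_zero.2 (hne w hw)
  -- conjugate of b is a
  have hconjb : ∀ w ∈ H, conj (wdzbar (cre χ) w) = wdz (cre χ) w := fun w hw => by
    rw [wdzbar_conj_cre (hdχ w hw), Complex.conj_conj]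
  -- Step 1: the two superpotential formulas on H
  have hMP : ∀ w ∈ H, dzbarlog φm w =
      (Complex.exp (2 * Complex.I * (χ w : ℂ)))⁻¹ * dzbarlog φp w := by
    intro w hw
    have h := congrArg conj (hz w hw)
    rw [map_mul, conj_dzlog (hdφm w hw), conj_dzlog (hdφp w hw), conj_expE] at h
    exact h
  have hPform : ∀ w ∈ H, dzbarlog φp w =
      (2 * Complex.I * wdzbar (cre χ) w) *
        (Complex.exp (2 * Complex.I * (χ w : ℂ)) *
          (Complex.exp (2 * Complex.I * (χ w : ℂ)) - 1)⁻¹) := by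
    intro w hw
    have h1 := hbar w hw
    have h2 := hMP w hw
    rw [h1] at h2
    field_simp at h2
    have hd := hEm1 w hw
    field_simp
    linear_combination h2
  have hP'form : ∀ w ∈ H, dzlog φp w =
      (2 * Complex.I * wdz (cre χ) w) *
        ((Complex.exp (2 * Complex.I * (χ w : ℂ)) - 1)⁻¹) := by
    intro w hw
    have h := congrArg conj (hbar w hw)
    rw [map_sub, conj_dzbarlog (hdφm w hw), conj_dzbarlog (hdφp w hw), map_mul, map_mul,
      hconjb w hw, map_ofNat, Complex.conj_I] at h
    -- h : dzlog φm w = dzlog φp w + 2 I a w  (after sign simplification)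
    have h2 := hz w hw
    rw [h2] at h
    have hd := hEm1 w hw
    field_simp
    linear_combination h
  -- differentiability of building blocks
  have hdb : ∀ w ∈ H, DifferentiableAt ℝ (wdzbar (cre χ)) w := fun w hw =>
    diffAt_of_contDiffOn isOpen_H (wdzbar_contDiffOn isOpen_H hχc) hw
  have hda : ∀ w ∈ H, DifferentiableAt ℝ (wdz (cre χ)) w := fun w hw =>
    diffAt_of_contDiffOn isOpen_H (wdz_contDiffOn isOpen_H hχc) hw
  have hdlin : ∀ w ∈ H, DifferentiableAt ℝ (fun u => 2 * Complex.I * (χ u : ℂ)) w :=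
    fun w hw => ((cre_hasFDerivAt (hdχ w hw)).differentiableAt).const_mul (2 * Complex.I)
  have hdE : ∀ w ∈ H, DifferentiableAt ℝ (fun u => Complex.exp (2 * Complex.I * (χ u : ℂ))) w :=
    fun w hw => (hdlin w hw).cexp
  have hdEm1inv : ∀ w ∈ H, DifferentiableAt ℝ
      (fun u => (Complex.exp (2 * Complex.I * (χ u : ℂ)) - 1)⁻¹) w := fun w hw =>
    ((hdE w hw).sub_const 1).inv (hEm1 w hw)
  -- value computations
  have vlin : ∀ w ∈ H, wdz (fun u => 2 * Complex.I * (χ u : ℂ)) w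
      = 2 * Complex.I * wdz (cre χ) w :=
    fun w hw => wdz_const_mul _ ((cre_hasFDerivAt (hdχ w hw)).differentiableAt)
  have vlinbar : ∀ w ∈ H, wdzbar (fun u => 2 * Complex.I * (χ u : ℂ)) w
      = 2 * Complex.I * wdzbar (cre χ) w :=
    fun w hw => wdzbar_const_mul _ ((cre_hasFDerivAt (hdχ w hw)).differentiableAt)
  have vE : ∀ w ∈ H, wdz (fun u => Complex.exp (2 * Complex.I * (χ u : ℂ))) w
      = Complex.exp (2 * Complex.I * (χ w : ℂ)) * (2 * Complex.I * wdz (cre χ) w) := by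
    intro w hw
    rw [wdz_cexp (hdlin w hw), vlin w hw]
  have vEbar : ∀ w ∈ H, wdzbar (fun u => Complex.exp (2 * Complex.I * (χ u : ℂ))) w
      = Complex.exp (2 * Complex.I * (χ w : ℂ)) * (2 * Complex.I * wdzbar (cre χ) w) := by
    intro w hw
    rw [wdzbar_cexp (hdlin w hw), vlinbar w hw]
  intro z hz
  have hd := hEm1 z hz
  have h0 := hE0 z
  have vInv : wdz (fun u => (Complex.exp (2 * Complex.I * (χ u : ℂ)) - 1)⁻¹) z =
      -(Complex.exp (2 * Complex.I * (χ z : ℂ)) * (2 * Complex.I * wdz (cre χ) z)) /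
        (Complex.exp (2 * Complex.I * (χ z : ℂ)) - 1) ^ 2 := by
    rw [wdz_inv ((hdE z hz).sub_const 1) (hEm1 z hz), wdz_sub_const 1 (hdE z hz), vE z hz]
  have vInvbar : wdzbar (fun u => (Complex.exp (2 * Complex.I * (χ u : ℂ)) - 1)⁻¹) z =
      -(Complex.exp (2 * Complex.I * (χ z : ℂ)) * (2 * Complex.I * wdzbar (cre χ) z)) /
        (Complex.exp (2 * Complex.I * (χ z : ℂ)) - 1) ^ 2 := by
    rw [wdzbar_inv ((hdE z hz).sub_const 1) (hEm1 z hz), wdzbar_sub_const 1 (hdE z hz),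
      vEbar z hz]
  -- Clairaut bridge via φp
  have hne0p : cre φp z ≠ 0 := Complex.ofReal_ne_zero.mpr (hposp z hz).ne'
  have hdwb : DifferentiableAt ℝ (wdzbar (cre φp)) z :=
    diffAt_of_contDiffOn isOpen_H (wdzbar_contDiffOn isOpen_H hφpc) hz
  have hdwa : DifferentiableAt ℝ (wdz (cre φp)) z :=
    diffAt_of_contDiffOn isOpen_H (wdz_contDiffOn isOpen_H hφpc) hz
  have hdcrep : DifferentiableAt ℝ (cre φp) z := diffAt_of_contDiffOn isOpen_H hφpc hz
  have hrew : dzbarlog φp = fun u => wdzbar (cre φp) u * (cre φp u)⁻¹ :=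
    funext fun u => div_eq_mul_inv _ _
  have hrew' : dzlog φp = fun u => wdz (cre φp) u * (cre φp u)⁻¹ :=
    funext fun u => div_eq_mul_inv _ _
  have eC : wdz (dzbarlog φp) z = wdzbar (dzlog φp) z := by
    rw [hrew, hrew', wdz_mul (g := fun u => (cre φp u)⁻¹) hdwb (hdcrep.inv hne0p),
      wdzbar_mul (g := fun u => (cre φp u)⁻¹) hdwa (hdcrep.inv hne0p),
      wdz_inv hdcrep hne0p, wdzbar_inv hdcrep hne0p, wdz_wdzbar_comm isOpen_H hφpc hz]
    ring
  -- differentiate the two formulas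
  have d1 : DifferentiableAt ℝ (fun u => 2 * Complex.I * wdzbar (cre χ) u) z :=
    (hdb z hz).const_mul _
  have d1' : DifferentiableAt ℝ (fun u => 2 * Complex.I * wdz (cre χ) u) z :=
    (hda z hz).const_mul _
  have d2 : DifferentiableAt ℝ (fun u => Complex.exp (2 * Complex.I * (χ u : ℂ)) *
      (Complex.exp (2 * Complex.I * (χ u : ℂ)) - 1)⁻¹) z := (hdE z hz).mul (hdEm1inv z hz)
  have vb : wdz (fun u => 2 * Complex.I * wdzbar (cre χ) u) z
      = 2 * Complex.I * wdz (wdzbar (cre χ)) z := wdz_const_mul _ (hdb z hz)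
  have vb' : wdzbar (fun u => 2 * Complex.I * wdz (cre χ) u) z
      = 2 * Complex.I * wdz (wdzbar (cre χ)) z := by
    rw [wdzbar_const_mul _ (hda z hz), ← wdz_wdzbar_comm isOpen_H hχc hz]
  have eA : wdz (dzbarlog φp) z = wdz (fun u => (2 * Complex.I * wdzbar (cre χ) u) *
      (Complex.exp (2 * Complex.I * (χ u : ℂ)) *
        (Complex.exp (2 * Complex.I * (χ u : ℂ)) - 1)⁻¹)) z :=
    wdz_congr (Filter.eventuallyEq_of_mem (isOpen_H.mem_nhds hz) hPform)
  have eB : wdzbar (dzlog φp) z = wdzbar (fun u => (2 * Complex.I * wdz (cre χ) u) *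
      ((Complex.exp (2 * Complex.I * (χ u : ℂ)) - 1)⁻¹)) z :=
    wdzbar_congr (Filter.eventuallyEq_of_mem (isOpen_H.mem_nhds hz) hP'form)
  have h := eA.symm.trans (eC.trans eB)
  rw [wdz_mul d1 d2, wdz_mul (hdE z hz) (hdEm1inv z hz), vb, vE z hz, vInv,
    wdzbar_mul d1' (hdEm1inv z hz), vb', vInvbar] at h
  have hc : wdz (wdzbar (cre χ)) z = 0 := by
    field_simp at h
    have h2 : 2 * Complex.I * wdz (wdzbar (cre χ)) z *
        (Complex.exp (2 * Complex.I * (χ z : ℂ)) - 1) ^ 7 = 0 := by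
      linear_combination (2 * Complex.I * (Complex.exp (2 * Complex.I * (χ z : ℂ)) - 1) ^ 5) * h
    have h7 : (Complex.exp (2 * Complex.I * (χ z : ℂ)) - 1) ^ 7 ≠ 0 := pow_ne_zero _ hd
    have hI : (2 : ℂ) * Complex.I ≠ 0 := by
      simp [Complex.I_ne_zero]
    rcases mul_eq_zero.mp h2 with h3 | h3
    · rcases mul_eq_zero.mp h3 with h4 | h4
      · exact absurd h4 hI
      · exact h4
    · exact absurd h3 h7
  refine ⟨hc, ?_, ?_⟩
  · rw [hPform z hz, vEbar z hz]
    rw [div_eq_mul_inv]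
    ring
  · have hdneg : DifferentiableAt ℝ (fun u => -(2 * Complex.I * (χ u : ℂ))) z :=
      (hdlin z hz).neg
    have vEneg : wdzbar (fun u => Complex.exp (-(2 * Complex.I * (χ u : ℂ)))) z
        = Complex.exp (-(2 * Complex.I * (χ z : ℂ))) *
          (-(2 * Complex.I * wdzbar (cre χ) z)) := by
      rw [wdzbar_cexp hdneg, wdzbar_neg (hdlin z hz), vlinbar z hz]
    have hm := hbar z hz
    rw [hPform z hz] at hm
    rw [hm, vEneg, Complex.exp_neg]
    have hinv1 : (Complex.exp (2 * Complex.I * (χ z : ℂ)))⁻¹ - 1 ≠ 0 := by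
      rw [sub_ne_zero]
      intro hcon
      exact hne z hz (by rw [← inv_inv (Complex.exp (2 * Complex.I * (χ z : ℂ))), hcon, inv_one])
    rw [eq_div_iff hinv1]
    field_simp
    ring
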